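/- Let A ∈ ℂ^{n×n}, B ∈ ℂ^{d×d}, E ∈ ℂ^{n×d}. Then L_exp(A, B, E) = ∫₀¹ exp(tA) · E · exp((1−t)B) dt, where the integral of the matrix-valued function of t ∈ [0,1] is taken entrywise (equivalently, as a Bochner integral in the finite-dimensional normed space of n×d complex matrices). -/

import Mathlib

/-!
Duhamel's formula `exp Y - exp X = ∫₀¹ exp (sY) (Y - X) exp ((1 - s)X) ds`, applied to
`Y = [[A, E], [0, B]]` and `X = [[A, 0], [0, B]]`: the `(1,2)` block of `exp X` vanishes,
`Y - X = [[0, E], [0, 0]]`, and the `(1,2)` block of the integrand is `exp (sA) E exp ((1 - s)B)`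
because the diagonal blocks of the exponential of a block triangular matrix are the exponentials
of its diagonal blocks.
-/

attribute [local instance] Matrix.linftyOpNormedAddCommGroup Matrix.linftyOpNormedSpace

/-- `L_exp(A, B, E)` is the `(1,2)` block of `exp [[A, E],[0, B]]`. -/
noncomputable def Lexp {n d : ℕ} (A : Matrix (Fin n) (Fin n) ℂ) (B : Matrix (Fin d) (Fin d) ℂ)
    (E : Matrix (Fin n) (Fin d) ℂ) : Matrix (Fin n) (Fin d) ℂ :=
  (NormedSpace.exp (Matrix.fromBlocks A E 0 B)).toBlocks₁₂

attribute [local instance] Matrix.linftyOpNormedRing Matrix.linftyOpNormedAlgebra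

open NormedSpace Matrix

theorem NormedSpace.map_exp_of_map_pow {𝕂 𝔸 𝔹 : Type*} [RCLike 𝕂] [NormedRing 𝔸]
    [NormedAlgebra 𝕂 𝔸] [CompleteSpace 𝔸] [NormedRing 𝔹] [NormedAlgebra 𝕂 𝔹] [CompleteSpace 𝔹]
    (f : 𝔸 →L[𝕂] 𝔹) {x : 𝔸} {y : 𝔹} (h : ∀ k : ℕ, f (x ^ k) = y ^ k) : f (exp x) = exp y := by
  have hf := (exp_series_hasSum_exp' (𝕂 := 𝕂) x).mapL f
  simp only [map_smul, h] at hf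
  exact hf.unique (exp_series_hasSum_exp' y)

theorem NormedSpace.exp_sub_exp_eq_integral {𝔸 : Type*} [NormedRing 𝔸] [NormedAlgebra ℝ 𝔸]
    [CompleteSpace 𝔸] (x y : 𝔸) :
    exp y - exp x = ∫ s in (0 : ℝ)..1, exp (s • y) * (y - x) * exp ((1 - s) • x) := by
  have hderiv : ∀ s : ℝ, HasDerivAt (fun s : ℝ => exp (s • y) * exp ((1 - s) • x))
      (exp (s • y) * (y - x) * exp ((1 - s) • x)) s := by
    intro s
    have hx : HasDerivAt (fun s : ℝ => exp ((1 - s) • x)) (-(x * exp ((1 - s) • x))) s := by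
      simpa [Function.comp_def] using
        (hasDerivAt_exp_smul_const' x (1 - s)).scomp s ((hasDerivAt_id s).const_sub 1)
    refine ((hasDerivAt_exp_smul_const y s).mul hx).congr_deriv ?_
    simp only [mul_sub, sub_mul, mul_neg, ← sub_eq_add_neg, mul_assoc]
  have hexp (z : 𝔸) : Continuous fun s : ℝ => exp (s • z) :=
    continuous_iff_continuousAt.2 fun s => (hasDerivAt_exp_smul_const z s).continuousAt
  have hcont : Continuous fun s : ℝ => exp (s • y) * (y - x) * exp ((1 - s) • x) :=
    ((hexp y).mul continuous_const).mul ((hexp x).comp (continuous_const.sub continuous_id))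
  rw [intervalIntegral.integral_eq_sub_of_hasDerivAt (fun s _ => hderiv s)
    (hcont.intervalIntegrable 0 1)]
  simp

namespace Matrix

variable {l m n o R : Type*}

def submatrixCLM [Semiring R] [TopologicalSpace R] (r : l → m) (c : o → n) :
    Matrix m n R →L[R] Matrix l o R where
  toFun A := A.submatrix r c
  map_add' _ _ := rfl
  map_smul' _ _ := rfl
  cont := continuous_id.matrix_submatrix r c

theorem toBlocks₁₂_mul_fromBlocks_zero_mul [Fintype m] [Fintype n] [NonUnitalNonAssocSemiring R]
    (P Q : Matrix (m ⊕ n) (m ⊕ n) R) (E : Matrix m n R) :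
    (P * fromBlocks 0 E 0 0 * Q).toBlocks₁₂ = P.toBlocks₁₁ * E * Q.toBlocks₂₂ := by
  rw [← fromBlocks_toBlocks P, ← fromBlocks_toBlocks Q]
  simp [fromBlocks_multiply]

theorem fromBlocks_zero₂₁_pow [Fintype m] [Fintype n] [DecidableEq m] [DecidableEq n] [Semiring R]
    (A : Matrix m m R) (B : Matrix m n R) (D : Matrix n n R) (k : ℕ) :
    ∃ X, fromBlocks A B 0 D ^ k = fromBlocks (A ^ k) X 0 (D ^ k) := by
  induction k with
  | zero => exact ⟨0, by simp [fromBlocks_one]⟩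
  | succ k ih =>
    obtain ⟨X, hX⟩ := ih
    exact ⟨A ^ k * B + X * D, by simp [pow_succ, hX, fromBlocks_multiply]⟩

section Exp

-- The default bound is too small to find `CompleteSpace (Matrix (m ⊕ n) (m ⊕ n) 𝕂)`.
set_option synthInstance.maxSize 256

variable [Fintype m] [Fintype n] [DecidableEq m] [DecidableEq n] {𝕂 : Type*} [RCLike 𝕂]

theorem toBlocks₁₁_exp_fromBlocks_zero₂₁ (A : Matrix m m 𝕂) (B : Matrix m n 𝕂)
    (D : Matrix n n 𝕂) : (exp (fromBlocks A B 0 D)).toBlocks₁₁ = exp A :=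
  map_exp_of_map_pow (submatrixCLM Sum.inl Sum.inl) (x := fromBlocks A B 0 D) (y := A)
    fun k => by
      obtain ⟨X, hX⟩ := fromBlocks_zero₂₁_pow A B D k
      exact (congrArg toBlocks₁₁ hX).trans (toBlocks_fromBlocks₁₁ _ _ _ _)

theorem toBlocks₂₂_exp_fromBlocks_zero₂₁ (A : Matrix m m 𝕂) (B : Matrix m n 𝕂)
    (D : Matrix n n 𝕂) : (exp (fromBlocks A B 0 D)).toBlocks₂₂ = exp D :=
  map_exp_of_map_pow (submatrixCLM Sum.inr Sum.inr) (x := fromBlocks A B 0 D) (y := D)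
    fun k => by
      obtain ⟨X, hX⟩ := fromBlocks_zero₂₁_pow A B D k
      exact (congrArg toBlocks₂₂ hX).trans (toBlocks_fromBlocks₂₂ _ _ _ _)

theorem toBlocks₁₂_exp_fromBlocks_zero₁₂ (A : Matrix m m 𝕂) (C : Matrix n m 𝕂)
    (D : Matrix n n 𝕂) : (exp (fromBlocks A 0 C D)).toBlocks₁₂ = 0 := by
  have h : (fromBlocks A 0 C D).BlockTriangular
      (Sum.elim (fun _ => 1) fun _ => 0 : m ⊕ n → ℕ) := by
    rintro (i | i) (j | j) hij <;> simp_all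
  ext i j
  exact h.exp (by simp)

end Exp

end Matrix

/-- Integral representation: `L_exp(A, B, E) = ∫₀¹ exp(tA) E exp((1−t)B) dt`. -/
theorem Lexp_eq_integral {n d : ℕ} (A : Matrix (Fin n) (Fin n) ℂ)
    (B : Matrix (Fin d) (Fin d) ℂ) (E : Matrix (Fin n) (Fin d) ℂ) :
    Lexp A B E =
      ∫ t : ℝ in (0 : ℝ)..1,
        NormedSpace.exp ((t : ℂ) • A) * E * NormedSpace.exp (((1 - t : ℝ) : ℂ) • B) := by
  set M := fromBlocks A E 0 B
  set M₀ := fromBlocks A 0 0 B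
  set F := fun s : ℝ => exp (s • M) * (M - M₀) * exp ((1 - s) • M₀)
  have hN : M - M₀ = fromBlocks 0 E 0 0 := by
    simp [M, M₀, sub_eq_add_neg, fromBlocks_neg, fromBlocks_add]
  have hDuhamel : exp M - exp M₀ = ∫ s in (0 : ℝ)..1, F s := exp_sub_exp_eq_integral M₀ M
  have hF : Continuous F := by fun_prop
  have hblock (s : ℝ) :
      (F s).toBlocks₁₂ = exp ((s : ℂ) • A) * E * exp (((1 - s : ℝ) : ℂ) • B) := by
    simp only [F, hN, toBlocks₁₂_mul_fromBlocks_zero_mul, M, M₀, fromBlocks_smul, smul_zero,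
      toBlocks₁₁_exp_fromBlocks_zero₂₁, toBlocks₂₂_exp_fromBlocks_zero₂₁, Complex.coe_smul]
  calc Lexp A B E = submatrixCLM (R := ℂ) Sum.inl Sum.inr (exp M₀ + (exp M - exp M₀)) := by
        rw [add_sub_cancel]; rfl
    _ = submatrixCLM (R := ℂ) Sum.inl Sum.inr (∫ s in (0 : ℝ)..1, F s) := by
      rw [map_add, hDuhamel, show submatrixCLM (R := ℂ) Sum.inl Sum.inr (exp M₀) = 0 from
        toBlocks₁₂_exp_fromBlocks_zero₁₂ A 0 B, zero_add]
    _ = ∫ s in (0 : ℝ)..1, (F s).toBlocks₁₂ :=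
      ((submatrixCLM (R := ℂ) Sum.inl Sum.inr).intervalIntegral_comp_comm
        (hF.intervalIntegrable 0 1)).symm
    _ = _ := intervalIntegral.integral_congr fun s _ => hblock s
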